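/- In the depth-2 Jones tower setup, M is exactly the set of invariants of the Ocneanu–Szymański action of B on M₁: {x ∈ M₁ : E_{M₁}(b x e₂) = F(b e₂)·x for all b ∈ B} = M. (Here b ⊳ x := λ⁻¹E_{M₁}(bxe₂) is the action and ε(b) = λ⁻¹F(be₂) the counit, so the condition reads b ⊳ x = ε(b)x for all b ∈ B.) -/

import Mathlib

/-!
For `x ∈ M₁`, testing invariance against `b = e₂ ∈ B` gives `E_{M₁}(e₂ x e₂) = λ E_M(x)` on the
left and `F(e₂) x = λ x` on the right, so `x = E_M(x) ∈ M`. Conversely, for `x ∈ M` and `b ∈ B`,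
`x` commutes with `b` and passes through `E_{M₁}`, leaving `x E_{M₁}(b e₂)`; the element
`E_{M₁}(b e₂) ∈ M₁` commutes with `M`, so it is the scalar `F(b e₂)` by `C_{M₁}(M) = k`.
-/

open scoped TensorProduct

/-- The depth-2 Jones tower setup: a tower `N ⊆ M ⊆ M₁ ⊆ R` (with `R` playing the
role of `M₂`) of unital `k`-algebras, with conditional expectations, Jones idempotents,
braid-like relations and depth-2 orthogonal dual bases, as in the paper. -/
structure JonesTower (k : Type*) [Field k] (R : Type*) [Ring R] [Algebra k R] where
  N : Subalgebra k R
  M : Subalgebra k R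
  M₁ : Subalgebra k R
  hNM : N ≤ M
  hMM₁ : M ≤ M₁
  lam : k
  hlam : lam ≠ 0
  E : R →ₗ[k] R
  EM : R →ₗ[k] R
  EM1 : R →ₗ[k] R
  hE_mem : ∀ m ∈ M, E m ∈ N
  hEM_mem : ∀ x ∈ M₁, EM x ∈ M
  hEM1_mem : ∀ x : R, EM1 x ∈ M₁
  hE_one : E 1 = 1
  hEM_one : EM 1 = 1
  hEM1_one : EM1 1 = 1
  hE_bimod : ∀ n ∈ N, ∀ n' ∈ N, ∀ m ∈ M, E (n * m * n') = n * E m * n'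
  hEM_bimod : ∀ m ∈ M, ∀ m' ∈ M, ∀ x ∈ M₁, EM (m * x * m') = m * EM x * m'
  hEM1_bimod : ∀ w ∈ M₁, ∀ w' ∈ M₁, ∀ x : R, EM1 (w * x * w') = w * EM1 x * w'
  n₀ : ℕ
  xb : Fin n₀ → R
  yb : Fin n₀ → R
  hxb : ∀ i, xb i ∈ M
  hyb : ∀ i, yb i ∈ M
  hE_dual₁ : ∀ m ∈ M, ∑ i, E (m * xb i) * yb i = m
  hE_dual₂ : ∀ m ∈ M, ∑ i, xb i * E (yb i * m) = m
  hE_index : ∑ i, xb i * yb i = lam⁻¹ • (1 : R)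
  hCMN : ∀ c ∈ M, (∀ n ∈ N, c * n = n * c) → ∃ μ : k, c = μ • (1 : R)
  hCM₁M : ∀ c ∈ M₁, (∀ m ∈ M, c * m = m * c) → ∃ μ : k, c = μ • (1 : R)
  hCM₂M₁ : ∀ c : R, (∀ w ∈ M₁, c * w = w * c) → ∃ μ : k, c = μ • (1 : R)
  e₁ : R
  e₂ : R
  he₁ : e₁ ∈ M₁
  he₁N : ∀ n ∈ N, e₁ * n = n * e₁
  he₂M : ∀ m ∈ M, e₂ * m = m * e₂
  he₁me₁ : ∀ m ∈ M, e₁ * m * e₁ = E m * e₁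
  he₂we₂ : ∀ w ∈ M₁, e₂ * w * e₂ = EM w * e₂
  hEMe₁ : EM e₁ = lam • (1 : R)
  hEM1e₂ : EM1 e₂ = lam • (1 : R)
  hspanM₁ : Subalgebra.toSubmodule M₁ =
    Submodule.span k {x : R | ∃ m ∈ M, ∃ m' ∈ M, x = m * e₁ * m'}
  hspanM₂ : (⊤ : Submodule k R) =
    Submodule.span k {x : R | ∃ w ∈ M₁, ∃ w' ∈ M₁, x = w * e₂ * w'}
  hbraid₁ : e₁ * e₂ * e₁ = lam • e₁
  hbraid₂ : e₂ * e₁ * e₂ = lam • e₂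
  r : ℕ
  zb : Fin r → R
  wb : Fin r → R
  hzbM₁ : ∀ i, zb i ∈ M₁
  hwbM₁ : ∀ i, wb i ∈ M₁
  hzbN : ∀ i, ∀ n ∈ N, zb i * n = n * zb i
  hwbN : ∀ i, ∀ n ∈ N, wb i * n = n * wb i
  hzw_orth : ∀ i j, EM (wb i * zb j) = if i = j then (1 : R) else 0
  hzw_dual₁ : ∀ x ∈ M₁, ∑ i, EM (x * zb i) * wb i = x
  hzw_dual₂ : ∀ x ∈ M₁, ∑ i, zb i * EM (wb i * x) = x
  hzw_index : ∑ i, zb i * wb i = lam⁻¹ • (1 : R)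
  s : ℕ
  ub : Fin s → R
  vb : Fin s → R
  hubM : ∀ i, ∀ m ∈ M, ub i * m = m * ub i
  hvbM : ∀ i, ∀ m ∈ M, vb i * m = m * vb i
  huv_orth : ∀ i j, EM1 (vb i * ub j) = if i = j then (1 : R) else 0
  huv_dual₁ : ∀ x : R, ∑ i, EM1 (x * ub i) * vb i = x
  huv_dual₂ : ∀ x : R, ∑ i, ub i * EM1 (vb i * x) = x
  huv_index : ∑ i, ub i * vb i = lam⁻¹ • (1 : R)
  F : R →ₗ[k] k
  hF : ∀ c : R, (∀ n ∈ N, c * n = n * c) → algebraMap k R (F c) = EM (EM1 c)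

variable {k : Type*} [Field k] {R : Type*} [Ring R] [Algebra k R]

/-- The second centralizer `A = C_{M₁}(N)`. -/
def JonesTower.A (T : JonesTower k R) : Subalgebra k R :=
  T.M₁ ⊓ Subalgebra.centralizer k (T.N : Set R)

/-- The second centralizer `B = C_{M₂}(M)`. -/
def JonesTower.B (T : JonesTower k R) : Subalgebra k R :=
  Subalgebra.centralizer k (T.M : Set R)

/-- The big centralizer `C = C_{M₂}(N)`. -/
def JonesTower.C (T : JonesTower k R) : Subalgebra k R :=
  Subalgebra.centralizer k (T.N : Set R)

namespace JonesTower

variable (T : JonesTower k R)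

theorem EM1_mul_left {w : R} (hw : w ∈ T.M₁) (x : R) : T.EM1 (w * x) = w * T.EM1 x := by
  simpa using T.hEM1_bimod w hw 1 (one_mem _) x

theorem EM1_mul_right (x : R) {w : R} (hw : w ∈ T.M₁) : T.EM1 (x * w) = T.EM1 x * w := by
  simpa using T.hEM1_bimod 1 (one_mem _) w hw x

theorem mem_B_iff {b : R} : b ∈ T.B ↔ ∀ m ∈ T.M, m * b = b * m :=
  Subalgebra.mem_centralizer_iff k

theorem e₂_mul_self : T.e₂ * T.e₂ = T.e₂ := by
  simpa [T.hEM_one] using T.he₂we₂ 1 (one_mem _)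

theorem e₂_mem_B : T.e₂ ∈ T.B :=
  T.mem_B_iff.2 fun m hm => (T.he₂M m hm).symm

theorem mul_e₂_commute_of_mem_B {b : R} (hb : b ∈ T.B) {m : R} (hm : m ∈ T.M) :
    b * T.e₂ * m = m * (b * T.e₂) := by
  rw [mul_assoc, T.he₂M m hm, ← mul_assoc, ← T.mem_B_iff.1 hb m hm, mul_assoc]

theorem EM1_commute_of_commute {c : R} (hc : ∀ m ∈ T.M, c * m = m * c) :
    ∀ m ∈ T.M, T.EM1 c * m = m * T.EM1 c := fun m hm => by
  rw [← T.EM1_mul_right c (T.hMM₁ hm), hc m hm, T.EM1_mul_left (T.hMM₁ hm)]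

theorem F_eq_of_EM1_eq_smul_one [Nontrivial R] {c : R} (hc : ∀ n ∈ T.N, c * n = n * c)
    {μ : k} (h : T.EM1 c = μ • (1 : R)) : T.F c = μ := by
  apply (algebraMap k R).injective
  rw [T.hF c hc, h, map_smul, T.hEM_one, Algebra.algebraMap_eq_smul_one]

theorem F_e₂ [Nontrivial R] : T.F T.e₂ = T.lam :=
  T.F_eq_of_EM1_eq_smul_one (fun n hn => T.he₂M n (T.hNM hn)) T.hEM1e₂

theorem EM1_mul_e₂_eq_F_smul_one [Nontrivial R] {b : R} (hb : b ∈ T.B) :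
    T.EM1 (b * T.e₂) = T.F (b * T.e₂) • (1 : R) := by
  obtain ⟨μ, hμ⟩ := T.hCM₁M _ (T.hEM1_mem _)
    (T.EM1_commute_of_commute fun m hm => T.mul_e₂_commute_of_mem_B hb hm)
  have hcN : ∀ n ∈ T.N, b * T.e₂ * n = n * (b * T.e₂) := fun n hn =>
    T.mul_e₂_commute_of_mem_B hb (T.hNM hn)
  rw [hμ, T.F_eq_of_EM1_eq_smul_one hcN hμ]

theorem EM1_e₂_mul_mul_e₂ {x : R} (hx : x ∈ T.M₁) :
    T.EM1 (T.e₂ * x * T.e₂) = T.lam • T.EM x := by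
  rw [T.he₂we₂ x hx, T.EM1_mul_left (T.hMM₁ (T.hEM_mem x hx)), T.hEM1e₂, mul_smul_comm,
    mul_one]

theorem EM1_mul_mul_e₂_of_mem_M [Nontrivial R] {b x : R} (hb : b ∈ T.B) (hx : x ∈ T.M) :
    T.EM1 (b * x * T.e₂) = T.F (b * T.e₂) • x := by
  have hbx : b * x = x * b := (T.mem_B_iff.1 hb x hx).symm
  rw [hbx, mul_assoc, T.EM1_mul_left (T.hMM₁ hx), T.EM1_mul_e₂_eq_F_smul_one hb,
    mul_smul_comm, mul_one]

end JonesTower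

/-- `M` is exactly the set of invariants of the Ocneanu–Szymański action
`b ⊳ x = λ⁻¹ E_{M₁}(b x e₂)` of `B` on `M₁`:
`{x ∈ M₁ : E_{M₁}(b x e₂) = F(b e₂) x for all b ∈ B} = M`. -/
theorem invariants_of_OS_action (T : JonesTower k R) [Nontrivial R] :
    {x : R | x ∈ T.M₁ ∧ ∀ b ∈ T.B, T.EM1 (b * x * T.e₂) = T.F (b * T.e₂) • x} =
      (T.M : Set R) := by
  ext x
  constructor
  · rintro ⟨hx, hinv⟩
    have key := hinv T.e₂ T.e₂_mem_B
    rw [T.e₂_mul_self, T.EM1_e₂_mul_mul_e₂ hx, T.F_e₂] at key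
    have hEMx : T.EM x = x := smul_right_injective R T.hlam key
    exact hEMx ▸ T.hEM_mem x hx
  · intro hx
    exact ⟨T.hMM₁ hx, fun b hb => T.EM1_mul_mul_e₂_of_mem_M hb hx⟩
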